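/- arXiv:2208.07359 — 3 statements merged into one kernel-verified Lean document; each statement's English description precedes it below -/
import Mathlib

section
/- For every positive integer n, there exists a family of sets A_1, A_2, ..., A_{n+1}, each a subset of the integer interval {1, 2, ..., n(n+1)/2}, such that every set A_i has exactly n elements, any two distinct sets A_i and A_j share at least one element, and each element of {1, ..., n(n+1)/2} belongs to exactly two of the sets. -/
private def tri (b : ℕ) : ℕ := ∑ i ∈ Finset.range b, i

private lemma tri_succ (b : ℕ) : tri (b+1) = tri b + b :=
  Finset.sum_range_succ _ b

private lemma tri_mono : Monotone tri := fun _ _ h =>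
  Finset.sum_le_sum_of_subset (Finset.range_subset_range.2 h)

private lemma tri_eq (n : ℕ) : tri (n+1) = n * (n+1) / 2 := by
  rw [tri, Finset.sum_range_id]
  simp [Nat.mul_comm]

private def enc (a b : ℕ) : ℕ := tri b + a + 1

private lemma enc_inj {a b a' b' : ℕ} (h1 : a < b) (h2 : a' < b')
    (h : enc a b = enc a' b') : a = a' ∧ b = b' := by
  have key : ∀ x y u v : ℕ, x < y → y < v → enc x y < enc u v := by
    intro x y u v hxy hyv
    have h3 : tri (y+1) ≤ tri v := tri_mono hyv
    have h4 := tri_succ y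
    unfold enc at *
    omega
  rcases lt_trichotomy b b' with hb | hb | hb
  · exact absurd h (Nat.ne_of_lt (key _ _ _ _ h1 hb))
  · subst hb; unfold enc at h; omega
  · exact absurd h.symm (Nat.ne_of_lt (key _ _ _ _ h2 hb))

private lemma enc_le {a b n : ℕ} (h1 : a < b) (h2 : b ≤ n) : enc a b ≤ tri (n+1) := by
  have h3 : tri (b+1) ≤ tri (n+1) := tri_mono (by omega)
  have h4 := tri_succ b
  unfold enc
  omega

private lemma enc_surj (n : ℕ) : ∀ x, 1 ≤ x → x ≤ tri (n+1) →
    ∃ a b, a < b ∧ b ≤ n ∧ enc a b = x := by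
  induction n with
  | zero => intro x h1 h2; simp [tri] at h2; omega
  | succ n ih =>
    intro x h1 h2
    by_cases hx : x ≤ tri (n+1)
    · obtain ⟨a, b, hab, hb, he⟩ := ih x h1 hx
      exact ⟨a, b, hab, hb.trans (Nat.le_succ n), he⟩
    · push_neg at hx
      have ht := tri_succ (n+1)
      refine ⟨x - tri (n+1) - 1, n+1, by omega, le_refl _, by unfold enc; omega⟩

private def Efun (n : ℕ) (i j : Fin (n+1)) : ℕ :=
  enc (min i.val j.val) (max i.val j.val)

/-- For every positive integer `n`, there is a family of sets `A 1, ..., A (n+1)`,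
each a subset of `{1, ..., n(n+1)/2}`, such that every set has exactly `n` elements,
any two distinct sets share at least one element, and each element of the interval
belongs to exactly two of the sets. -/
theorem stmt_0 (n : ℕ) (hn : 0 < n) :
    ∃ A : Fin (n + 1) → Finset ℕ,
      (∀ i, A i ⊆ Finset.Icc 1 (n * (n + 1) / 2)) ∧
      (∀ i, (A i).card = n) ∧
      (∀ i j, i ≠ j → (A i ∩ A j).Nonempty) ∧
      (∀ x ∈ Finset.Icc 1 (n * (n + 1) / 2),
        (Finset.univ.filter fun i => x ∈ A i).card = 2) := by
  classical
  refine ⟨fun i => (Finset.univ.erase i).image (Efun n i), ?_, ?_, ?_, ?_⟩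
  · intro i x hx
    simp only [Finset.mem_image, Finset.mem_erase, Finset.mem_univ, and_true] at hx
    obtain ⟨j, hji, hej⟩ := hx
    have hij : (i : ℕ) ≠ (j : ℕ) := fun h => hji (Fin.ext h.symm)
    have h1 : min i.val j.val < max i.val j.val := by omega
    have h2 : max i.val j.val ≤ n := by
      have := i.isLt; have := j.isLt; omega
    rw [Finset.mem_Icc, ← tri_eq n, ← hej]
    exact ⟨by unfold Efun enc; omega, enc_le h1 h2⟩
  · intro i
    have hinj : Set.InjOn (Efun n i) (Finset.univ.erase i) := by
      intro j hj j' hj' he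
      simp only [Finset.coe_erase, Set.mem_diff, Finset.mem_coe, Finset.mem_singleton] at hj hj'
      have hji : (j : ℕ) ≠ (i : ℕ) := fun h => hj.2 (Fin.ext h)
      have hji' : (j' : ℕ) ≠ (i : ℕ) := fun h => hj'.2 (Fin.ext h)
      unfold Efun at he
      have := enc_inj (by omega) (by omega) he
      exact Fin.ext (by omega)
    rw [Finset.card_image_of_injOn hinj, Finset.card_erase_of_mem (Finset.mem_univ i),
      Finset.card_univ, Fintype.card_fin]
    omega
  · intro i j hij
    refine ⟨Efun n i j, Finset.mem_inter.2 ⟨?_, ?_⟩⟩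
    · exact Finset.mem_image.2 ⟨j, Finset.mem_erase.2 ⟨hij.symm, Finset.mem_univ _⟩, rfl⟩
    · refine Finset.mem_image.2 ⟨i, Finset.mem_erase.2 ⟨hij, Finset.mem_univ _⟩, ?_⟩
      unfold Efun
      rw [Nat.min_comm, Nat.max_comm]
  · intro x hx
    rw [Finset.mem_Icc, ← tri_eq n] at hx
    obtain ⟨a, b, hab, hb, he⟩ := enc_surj n x hx.1 hx.2
    set ia : Fin (n+1) := ⟨a, by omega⟩ with hia
    set ib : Fin (n+1) := ⟨b, by omega⟩ with hib
    have hne : ia ≠ ib := fun h => by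
      have : a = b := congrArg Fin.val h
      omega
    have hset : (Finset.univ.filter fun i => x ∈ (Finset.univ.erase i).image (Efun n i))
        = {ia, ib} := by
      ext i
      simp only [Finset.mem_filter, Finset.mem_univ, true_and, Finset.mem_image,
        Finset.mem_erase, and_true, Finset.mem_insert, Finset.mem_singleton]
      constructor
      · rintro ⟨j, hji, hej⟩
        have hij : (i : ℕ) ≠ (j : ℕ) := fun h => hji (Fin.ext h.symm)
        rw [← he] at hej
        unfold Efun at hej
        have := enc_inj (by omega) hab hej
        rcases (by omega : (i : ℕ) = a ∨ (i : ℕ) = b) with h | h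
        · exact Or.inl (Fin.ext h)
        · exact Or.inr (Fin.ext h)
      · rintro (rfl | rfl)
        · refine ⟨ib, fun h => hne (by rw [h]), ?_⟩
          unfold Efun
          simp only [hia, hib]
          rw [Nat.min_eq_left (by omega), Nat.max_eq_right (by omega)]
          exact he
        · refine ⟨ia, fun h => hne (by rw [h]), ?_⟩
          unfold Efun
          simp only [hia, hib]
          rw [Nat.min_eq_right (by omega), Nat.max_eq_left (by omega)]
          exact he
    rw [hset, Finset.card_pair hne]
end

section
/- For all positive integers k and m with k(k+1)/2 ≤ m, there exist k+1 subsets T_1, ..., T_{k+1} of {1, ..., m}, each of cardinality exactly k, such that any two distinct sets T_i and T_j have nonempty intersection, and every element of {1, ..., m} belongs to at most two of the sets. -/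
/-- Triangular pair encoding: for `a < b`, `pf a b = b*(b-1)/2 + a + 1`. -/
def pf (a b : ℕ) : ℕ := b * (b - 1) / 2 + a + 1

lemma tri_s2 (b : ℕ) : b * (b - 1) / 2 + b = b * (b + 1) / 2 := by
  cases b with
  | zero => simp
  | succ c =>
    have h1 : (c + 1) * (c + 1 + 1) = (c + 1) * (c + 1 - 1) + 2 * (c + 1) := by
      simp; ring
    rw [h1, Nat.add_mul_div_left _ _ (by norm_num : 0 < 2)]

lemma pf_le {a b k : ℕ} (hab : a < b) (hb : b ≤ k) : pf a b ≤ k * (k + 1) / 2 := by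
  have h1 : pf a b ≤ b * (b - 1) / 2 + b := by unfold pf; omega
  have h2 : b * (b + 1) ≤ k * (k + 1) := Nat.mul_le_mul hb (by omega)
  calc pf a b ≤ b * (b - 1) / 2 + b := h1
    _ = b * (b + 1) / 2 := tri_s2 b
    _ ≤ k * (k + 1) / 2 := Nat.div_le_div_right h2

lemma pf_lt {a b a' b' : ℕ} (hab : a < b) (hbb : b < b') : pf a b < pf a' b' := by
  have h1 : pf a b ≤ b * (b - 1) / 2 + b := by unfold pf; omega
  have h2 : b * (b + 1) ≤ b' * (b' - 1) := by
    have : b + 1 ≤ b' := hbb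
    calc b * (b + 1) ≤ (b' - 1) * b' := Nat.mul_le_mul (by omega) this
      _ = b' * (b' - 1) := Nat.mul_comm _ _
  have h3 : b * (b + 1) / 2 ≤ b' * (b' - 1) / 2 := Nat.div_le_div_right h2
  have h4 : b' * (b' - 1) / 2 < pf a' b' := by unfold pf; omega
  have h5 := tri_s2 b
  omega

lemma pf_inj {a b a' b' : ℕ} (hab : a < b) (hab' : a' < b')
    (h : pf a b = pf a' b') : a = a' ∧ b = b' := by
  rcases Nat.lt_trichotomy b b' with hb | hb | hb
  · exact absurd h (Nat.ne_of_lt (pf_lt hab hb))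
  · subst hb; unfold pf at h; omega
  · exact absurd h.symm (Nat.ne_of_lt (pf_lt hab' hb))

/-- symmetric pair index -/
def pg (i j : ℕ) : ℕ := pf (min i j) (max i j)

lemma pg_comm (i j : ℕ) : pg i j = pg j i := by
  unfold pg; rw [Nat.min_comm, Nat.max_comm]

/-- For all positive integers `k` and `m` with `k(k+1)/2 ≤ m`, there exist `k+1`
subsets of `{1, ..., m}`, each of cardinality exactly `k`, such that any two distinct
sets intersect, and every element of `{1, ..., m}` belongs to at most two of the sets. -/
theorem stmt_2 (k m : ℕ) (hk : 0 < k) (hm : 0 < m) (h : k * (k + 1) / 2 ≤ m) :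
    ∃ T : Fin (k + 1) → Finset ℕ,
      (∀ i, T i ⊆ Finset.Icc 1 m) ∧
      (∀ i, (T i).card = k) ∧
      (∀ i j, i ≠ j → (T i ∩ T j).Nonempty) ∧
      (∀ x ∈ Finset.Icc 1 m,
        (Finset.univ.filter fun i => x ∈ T i).card ≤ 2) := by
  refine ⟨fun i => (Finset.univ.filter (· ≠ i)).image (fun j : Fin (k+1) => pg i.val j.val),
    ?_, ?_, ?_, ?_⟩
  · -- subset of Icc 1 m
    intro i x hx
    simp only [Finset.mem_image, Finset.mem_filter, Finset.mem_univ, true_and] at hx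
    obtain ⟨j, hji, rfl⟩ := hx
    have hij : i.val ≠ j.val := fun hc => hji (Fin.ext hc.symm)
    have hmin : min i.val j.val < max i.val j.val := by omega
    have hmax : max i.val j.val ≤ k := by
      have := i.isLt; have := j.isLt; omega
    have := pf_le hmin hmax
    simp only [Finset.mem_Icc]
    constructor
    · unfold pg pf; omega
    · unfold pg; omega
  · -- cardinality
    intro i
    have hinj : Set.InjOn (fun j : Fin (k+1) => pg i.val j.val)
        (Finset.univ.filter (· ≠ i)) := by
      intro j hj j' hj' hjj
      simp only [Finset.coe_filter, Finset.mem_univ, true_and, Set.mem_setOf_eq] at hj hj'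
      have hij : i.val ≠ j.val := fun hc => hj (Fin.ext hc.symm)
      have hij' : i.val ≠ j'.val := fun hc => hj' (Fin.ext hc.symm)
      have h1 : min i.val j.val < max i.val j.val := by omega
      have h2 : min i.val j'.val < max i.val j'.val := by omega
      obtain ⟨e1, e2⟩ := pf_inj h1 h2 hjj
      apply Fin.ext
      omega
    rw [Finset.card_image_of_injOn hinj, Finset.filter_ne', Finset.card_erase_of_mem
      (Finset.mem_univ i), Finset.card_univ, Fintype.card_fin]
    omega
  · -- pairwise intersection
    intro i j hij
    refine ⟨pg i.val j.val, Finset.mem_inter.2 ⟨?_, ?_⟩⟩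
    · exact Finset.mem_image.2 ⟨j, Finset.mem_filter.2 ⟨Finset.mem_univ j,
        fun hc => hij hc.symm⟩, rfl⟩
    · exact Finset.mem_image.2 ⟨i, Finset.mem_filter.2 ⟨Finset.mem_univ i,
        fun hc => hij hc⟩, (pg_comm j.val i.val)⟩
  · -- each element in at most two sets
    intro x _
    by_cases hS : (Finset.univ.filter fun i : Fin (k+1) =>
        x ∈ (Finset.univ.filter (· ≠ i)).image (fun j : Fin (k+1) => pg i.val j.val)).Nonempty
    · obtain ⟨i₀, hi₀⟩ := hS
      simp only [Finset.mem_filter, Finset.mem_univ, true_and, Finset.mem_image] at hi₀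
      obtain ⟨j₀, hj₀mem, hj₀⟩ := hi₀
      have hij₀ : i₀.val ≠ j₀.val := fun hc => hj₀mem (Fin.ext hc.symm)
      have hsub : (Finset.univ.filter fun i : Fin (k+1) =>
          x ∈ (Finset.univ.filter (· ≠ i)).image (fun j : Fin (k+1) => pg i.val j.val))
          ⊆ {i₀, j₀} := by
        intro i hi
        simp only [Finset.mem_filter, Finset.mem_univ, true_and, Finset.mem_image] at hi
        obtain ⟨j, hjmem, hj⟩ := hi
        have hij : i.val ≠ j.val := fun hc => hjmem (Fin.ext hc.symm)
        have heq : pg i.val j.val = pg i₀.val j₀.val := by rw [hj, hj₀]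
        unfold pg at heq
        have h1 : min i.val j.val < max i.val j.val := by omega
        have h2 : min i₀.val j₀.val < max i₀.val j₀.val := by omega
        obtain ⟨e1, e2⟩ := pf_inj h1 h2 heq
        simp only [Finset.mem_insert, Finset.mem_singleton]
        have : i.val = i₀.val ∨ i.val = j₀.val := by omega
        rcases this with hc | hc
        · exact Or.inl (Fin.ext hc)
        · exact Or.inr (Fin.ext hc)
      calc _ ≤ ({i₀, j₀} : Finset (Fin (k+1))).card := Finset.card_le_card hsub
        _ ≤ 2 := Finset.card_insert_le _ _ |>.trans (by simp)
    · rw [Finset.not_nonempty_iff_eq_empty] at hS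
      rw [hS]; simp
end

section
/- For all positive integers m and k with 1 ≤ k ≤ m/2, the sum Σ_{i=1}^{k} C(m, i) of binomial coefficients is at most 2^{H(k/m)·m}, where H(x) = −x·log₂(x) − (1 − x)·log₂(1 − x) is the binary entropy function. -/
/-- The binary entropy function `H(x) = -x log₂ x - (1-x) log₂ (1-x)`. -/
noncomputable def binaryEntropy (x : ℝ) : ℝ :=
  -x * Real.logb 2 x - (1 - x) * Real.logb 2 (1 - x)

/-- For positive integers `m` and `k` with `1 ≤ k ≤ m/2`, the sum `Σ_{i=1}^{k} C(m, i)`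
is at most `2^{H(k/m)·m}`, where `H` is the binary entropy function. -/
theorem stmt_11 (m k : ℕ) (hm : 0 < m) (hk : 1 ≤ k) (hkm : (k : ℝ) ≤ m / 2) :
    (∑ i ∈ Finset.Icc 1 k, (m.choose i : ℝ))
      ≤ (2 : ℝ) ^ (binaryEntropy ((k : ℝ) / m) * m) := by
  set p : ℝ := (k : ℝ) / m with hp_def
  have hm0 : (0 : ℝ) < m := by exact_mod_cast hm
  have hp : 0 < p := div_pos (by exact_mod_cast hk) hm0
  have hp1 : p ≤ 1 / 2 := by
    rw [hp_def, div_le_div_iff₀ hm0 (by norm_num)]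
    linarith
  have h1p : 0 < 1 - p := by linarith
  have hple : p ≤ 1 - p := by linarith
  have hkm' : k ≤ m := by
    have : (k : ℝ) ≤ m := by linarith
    exact_mod_cast this
  have hpm : p * m = k := div_mul_cancel₀ _ (ne_of_gt hm0)
  have hmkcast : ((m - k : ℕ) : ℝ) = (m : ℝ) - k := Nat.cast_sub hkm'
  -- positivity of the weight
  have hwpos : 0 < p ^ k * (1 - p) ^ (m - k) :=
    mul_pos (pow_pos hp k) (pow_pos h1p (m - k))
  -- main combinatorial inequality
  have hmain : (∑ i ∈ Finset.Icc 1 k, (m.choose i : ℝ)) * (p ^ k * (1 - p) ^ (m - k)) ≤ 1 := by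
    calc (∑ i ∈ Finset.Icc 1 k, (m.choose i : ℝ)) * (p ^ k * (1 - p) ^ (m - k))
        = ∑ i ∈ Finset.Icc 1 k, (m.choose i : ℝ) * (p ^ k * (1 - p) ^ (m - k)) :=
          Finset.sum_mul _ _ _
      _ ≤ ∑ i ∈ Finset.Icc 1 k, p ^ i * (1 - p) ^ (m - i) * (m.choose i : ℝ) := by
          apply Finset.sum_le_sum
          intro i hi
          simp only [Finset.mem_Icc] at hi
          have hik : i ≤ k := hi.2
          have key : p ^ k * (1 - p) ^ (m - k) ≤ p ^ i * (1 - p) ^ (m - i) := by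
            have e1 : p ^ k = p ^ i * p ^ (k - i) := by rw [← pow_add]; congr 1; omega
            have e2 : (1 - p) ^ (m - i) = (1 - p) ^ (m - k) * (1 - p) ^ (k - i) := by
              rw [← pow_add]; congr 1; omega
            rw [e1, e2]
            have h3 : p ^ (k - i) ≤ (1 - p) ^ (k - i) := pow_le_pow_left₀ hp.le hple _
            calc p ^ i * p ^ (k - i) * (1 - p) ^ (m - k)
                ≤ p ^ i * (1 - p) ^ (k - i) * (1 - p) ^ (m - k) := by
                  apply mul_le_mul_of_nonneg_right _ (by positivity)
                  exact mul_le_mul_of_nonneg_left h3 (by positivity)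
              _ = p ^ i * ((1 - p) ^ (m - k) * (1 - p) ^ (k - i)) := by ring
          calc (m.choose i : ℝ) * (p ^ k * (1 - p) ^ (m - k))
              ≤ (m.choose i : ℝ) * (p ^ i * (1 - p) ^ (m - i)) :=
                mul_le_mul_of_nonneg_left key (by positivity)
            _ = p ^ i * (1 - p) ^ (m - i) * (m.choose i : ℝ) := by ring
      _ ≤ ∑ i ∈ Finset.range (m + 1), p ^ i * (1 - p) ^ (m - i) * (m.choose i : ℝ) := by
          apply Finset.sum_le_sum_of_subset_of_nonneg
          · intro i hi
            simp only [Finset.mem_Icc] at hi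
            simp only [Finset.mem_range]
            omega
          · intro i _ _
            positivity
      _ = (p + (1 - p)) ^ m := (add_pow _ _ _).symm
      _ = 1 := by norm_num
  -- rewrite the RHS
  have hH : binaryEntropy p * m =
      Real.logb 2 p * (-(k : ℝ)) + Real.logb 2 (1 - p) * (-((m - k : ℕ) : ℝ)) := by
    unfold binaryEntropy
    rw [hmkcast]
    linear_combination (Real.logb 2 (1 - p) - Real.logb 2 p) * hpm
  have h2 : (2 : ℝ) ^ (binaryEntropy p * m) = (p ^ k)⁻¹ * ((1 - p) ^ (m - k))⁻¹ := by
    rw [hH, Real.rpow_add (by norm_num : (0:ℝ) < 2),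
      Real.rpow_mul (by norm_num : (0:ℝ) ≤ 2), Real.rpow_mul (by norm_num : (0:ℝ) ≤ 2),
      Real.rpow_logb (by norm_num) (by norm_num) hp,
      Real.rpow_logb (by norm_num) (by norm_num) h1p,
      Real.rpow_neg hp.le, Real.rpow_neg h1p.le,
      Real.rpow_natCast, Real.rpow_natCast]
  rw [h2, ← mul_inv, ← one_div, le_div_iff₀ hwpos]
  exact hmain
end
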